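/- Let ρ : sl_{n+1}(K) → End_K(K[x_1,…,x_n]) be a Lie algebra homomorphism such that ρ(e_{i,n+1}) is multiplication by x_i for every 1 ≤ i ≤ n; set p_{ij} := ρ(e_{ij})(1) for i ≠ j, p_{ii} := ρ(h_i)(1), and q_i := ρ(e_{n+1,i})(1). Then for all 1 ≤ i, k ≤ n: x_k·q_i^k + δ_{ki}·q_i + Σ_{r=1}^n (p_{kk}^r·p_{ri} + x_r·p_{kk}^{ir} + p_{kk}^i·p_{rr}) = 0. In particular (taking k = i) each q_i is the unique polynomial with ∂/∂x_i(x_i·q_i) = −Σ_{r=1}^n (p_{ii}^r·p_{ri} + x_r·p_{ii}^{ir} + p_{ii}^i·p_{rr}), so q_i is uniquely determined by the polynomials p_{ab}. -/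

import Mathlib

open LieAlgebra.SpecialLinear Matrix

attribute [local instance 100] LieRing.ofAssociativeRing

/-- The matrix unit `e_{ab}` (for `a ≠ b`) as an element of `sl_N(K)`. -/
noncomputable def eE {K : Type*} [Field K] {N : ℕ} (a b : Fin N) (hab : a ≠ b) :
    sl (Fin N) K := LieAlgebra.SpecialLinear.single a b hab (1 : K)

/-- The element `h_i = e_{ii} - (1/(n+1))·I` of `sl_{n+1}(K)` (indices `1 ≤ i ≤ n`). -/
noncomputable def hE {K : Type*} [Field K] [CharZero K] {n : ℕ} (i : Fin n) :
    sl (Fin (n + 1)) K :=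
  ⟨Matrix.single i.castSucc i.castSucc (1 : K) - ((n + 1 : K))⁻¹ • 1, by
    show _ ∈ LinearMap.ker (Matrix.traceLinearMap (Fin (n + 1)) K K)
    rw [LinearMap.mem_ker, map_sub]
    have h1 : (Matrix.traceLinearMap (Fin (n + 1)) K K)
        (Matrix.single i.castSucc i.castSucc (1 : K)) = 1 := by
      simp [Matrix.traceLinearMap, Matrix.trace, Matrix.diag, Matrix.single,
        Finset.sum_ite_eq]
    have h2 : (Matrix.traceLinearMap (Fin (n + 1)) K K)
        (((n + 1 : K))⁻¹ • (1 : Matrix (Fin (n + 1)) (Fin (n + 1)) K)) = 1 := by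
      rw [_root_.map_smul]
      simp only [Matrix.traceLinearMap_apply, Matrix.trace_one, Fintype.card_fin,
        smul_eq_mul]
      push_cast
      exact inv_mul_cancel₀ (Nat.cast_add_one_ne_zero n)
    rw [h1, h2, sub_self]⟩

/-- The element `e_{i,n+1}` of `sl_{n+1}(K)` (denoted `x_i`), for `1 ≤ i ≤ n`. -/
noncomputable def xg {K : Type*} [Field K] {n : ℕ} (i : Fin n) : sl (Fin (n + 1)) K :=
  eE i.castSucc (Fin.last n) (Fin.castSucc_lt_last i).ne

/-- The element `e_{ij}` of `sl_{n+1}(K)` for `1 ≤ i ≠ j ≤ n`. -/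
noncomputable def eg {K : Type*} [Field K] {n : ℕ} (i j : Fin n) (hij : i ≠ j) :
    sl (Fin (n + 1)) K :=
  eE i.castSucc j.castSucc (by simpa [Fin.ext_iff] using hij)

/-- The element `e_{n+1,i}` of `sl_{n+1}(K)` for `1 ≤ i ≤ n`. -/
noncomputable def fg {K : Type*} [Field K] {n : ℕ} (i : Fin n) : sl (Fin (n + 1)) K :=
  eE (Fin.last n) i.castSucc (Fin.castSucc_lt_last i).ne'

/-- The element `h̄ = h_1 + ⋯ + h_n` of `sl_{n+1}(K)`. -/
noncomputable def hbar (K : Type*) [Field K] [CharZero K] (n : ℕ) :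
    sl (Fin (n + 1)) K := ∑ i : Fin n, hE i


section AuxPoly
open MvPolynomial

lemma endMul {K : Type*} [CommSemiring K] {n : ℕ}
    (D : Module.End K (MvPolynomial (Fin n) K))
    (h : ∀ (j : Fin n) (f : MvPolynomial (Fin n) K), D (X j * f) = X j * D f)
    (f : MvPolynomial (Fin n) K) : D f = D 1 * f := by
  induction f using MvPolynomial.induction_on with
  | C a =>
      have : (C a : MvPolynomial (Fin n) K) = a • 1 := by
        rw [smul_eq_C_mul, mul_one]
      rw [this, _root_.map_smul, smul_eq_C_mul, smul_eq_C_mul]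
      ring
  | add p q hp hq => rw [map_add, hp, hq, mul_add]
  | mul_X p j hp => rw [mul_comm p (X j), h j p, hp]; ring

lemma coeff_pderiv' {K : Type*} [CommSemiring K] {n : ℕ} (i : Fin n)
    (p : MvPolynomial (Fin n) K) (m : Fin n →₀ ℕ) :
    coeff m (pderiv i p) = (m i + 1 : ℕ) * coeff (m + Finsupp.single i 1) p := by
  classical
  induction p using MvPolynomial.induction_on' with
  | monomial s a =>
      rw [pderiv_monomial, coeff_monomial, coeff_monomial]
      have key : (s - Finsupp.single i 1 = m ∧ s i ≠ 0) ↔ (s = m + Finsupp.single i 1) := by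
        constructor
        · rintro ⟨hh, hsi⟩
          ext j
          have := congrArg (fun t => t j) hh
          simp only [Finsupp.tsub_apply, Finsupp.coe_add, Pi.add_apply] at this ⊢
          rcases eq_or_ne j i with rfl | hji
          · simp only [Finsupp.single_eq_same] at this ⊢; omega
          · simp only [Finsupp.single_apply, if_neg (Ne.symm hji)] at this ⊢; omega
        · intro hh; subst hh
          constructor
          · ext j
            simp only [Finsupp.tsub_apply, Finsupp.coe_add, Pi.add_apply]
            rcases eq_or_ne j i with rfl | hji
            · simp
            · simp [Finsupp.single_apply, Ne.symm hji]
          · simp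
      by_cases h3 : s = m + Finsupp.single i 1
      · obtain ⟨h4, h5⟩ := key.mpr h3
        rw [if_pos h4, if_pos h3]
        have : s i = m i + 1 := by
          subst h3; simp
        rw [this]; push_cast; ring
      · rw [if_neg h3]
        by_cases h4 : s - Finsupp.single i 1 = m
        · rw [if_pos h4]
          have hsi : s i = 0 := by
            by_contra hsi
            exact h3 (key.mp ⟨h4, hsi⟩)
          rw [hsi]; simp
        · rw [if_neg h4]; simp
  | add p q hp hq => rw [map_add, coeff_add, coeff_add, hp, hq, mul_add]

lemma pderiv_comm' {K : Type*} [CommSemiring K] {n : ℕ} (i j : Fin n)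
    (p : MvPolynomial (Fin n) K) :
    pderiv i (pderiv j p) = pderiv j (pderiv i p) := by
  ext m
  rw [coeff_pderiv', coeff_pderiv', coeff_pderiv', coeff_pderiv']
  rcases eq_or_ne i j with rfl | hij
  · ring
  · have h1 : ((m + Finsupp.single i 1 : Fin n →₀ ℕ)) j = m j := by
      simp [Finsupp.single_apply, hij]
    have h2 : ((m + Finsupp.single j 1 : Fin n →₀ ℕ)) i = m i := by
      simp [Finsupp.single_apply, Ne.symm hij]
    rw [h1, h2, add_right_comm m (Finsupp.single i 1) (Finsupp.single j 1)]
    ring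

lemma uniq_aux {K : Type*} [Field K] [CharZero K] {n : ℕ} (i : Fin n)
    (g : MvPolynomial (Fin n) K) (h : pderiv i (X i * g) = 0) : g = 0 := by
  classical
  ext m
  have h2 : coeff m (pderiv i (X i * g)) = ((m i : K) + 1) * coeff m g := by
    rw [pderiv_mul, pderiv_X_self, one_mul, coeff_add, coeff_X_mul']
    by_cases hm : i ∈ m.support
    · rw [if_pos hm, coeff_pderiv']
      have hmi : m i ≠ 0 := Finsupp.mem_support_iff.mp hm
      have hms : m - Finsupp.single i 1 + Finsupp.single i 1 = m := by
        ext j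
        simp only [Finsupp.coe_add, Pi.add_apply, Finsupp.tsub_apply]
        rcases eq_or_ne j i with rfl | hji
        · simp only [Finsupp.single_eq_same]; omega
        · simp [Finsupp.single_apply, Ne.symm hji]
      rw [hms]
      have hval : (m - Finsupp.single i 1 : Fin n →₀ ℕ) i + 1 = m i := by
        rw [Finsupp.tsub_apply, Finsupp.single_eq_same]
        omega
      rw [hval]
      push_cast
      ring
    · rw [if_neg hm]
      have hmi : m i = 0 := by simpa using hm
      rw [hmi]
      push_cast
      ring
  rw [h, coeff_zero] at h2
  have hne : ((m i : K) + 1) ≠ 0 := Nat.cast_add_one_ne_zero (m i)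
  rw [coeff_zero]
  exact (mul_eq_zero.mp h2.symm).resolve_left hne

end AuxPoly

section AuxMat

lemma comm_std {K : Type*} [Field K] {N : ℕ} (a b c d : Fin N) :
    Matrix.single a b (1:K) * Matrix.single c d 1 =
      if b = c then Matrix.single a d 1 else 0 := by
  split
  · next h => subst h; rw [Matrix.single_mul_single_same, one_mul]
  · next h => rw [Matrix.single_mul_single_of_ne (h := h)]

lemma sum_diag_std {K : Type*} [Field K] {N : ℕ} :
    ∑ a : Fin N, Matrix.single a a (1:K) = 1 := by
  ext i j
  rw [Matrix.sum_apply]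
  by_cases h : i = j
  · subst h
    simp [Matrix.single, Matrix.one_apply, Finset.sum_ite_eq]
  · rw [Finset.sum_eq_zero, Matrix.one_apply_ne h]
    intro x _
    simp only [Matrix.single, of_apply, ite_eq_right_iff, and_imp]
    rintro rfl rfl; exact absurd rfl h

end AuxMat

section Brackets

variable {K : Type*} [Field K] [CharZero K] {n : ℕ}

lemma eE_val {N : ℕ} (a b : Fin N) (hab : a ≠ b) :
    (eE a b hab : sl (Fin N) K).val = Matrix.single a b (1:K) := rfl

lemma hE_val (i : Fin n) :
    (hE i : sl (Fin (n+1)) K).val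
      = Matrix.single i.castSucc i.castSucc (1:K) - ((n + 1 : K))⁻¹ • 1 := rfl

lemma eE_bracket {N : ℕ} (a b c d : Fin N) (hab : a ≠ b) (hcd : c ≠ d) :
    (⁅(eE a b hab : sl (Fin N) K), eE c d hcd⁆).val =
      (if b = c then Matrix.single a d (1:K) else 0)
        - (if d = a then Matrix.single c b (1:K) else 0) := by
  rw [sl_bracket, eE_val, eE_val, comm_std, comm_std]

lemma brXH (j i : Fin n) :
    ⁅(xg j : sl (Fin (n+1)) K), hE i⁆ = (if i = j then -(xg j) else 0 : sl (Fin (n+1)) K) := by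
  apply Subtype.ext
  rw [sl_bracket]
  show Matrix.single j.castSucc (Fin.last n) (1:K)
      * (Matrix.single i.castSucc i.castSucc 1 - ((n + 1 : K))⁻¹ • 1)
    - (Matrix.single i.castSucc i.castSucc 1 - ((n + 1 : K))⁻¹ • 1)
      * Matrix.single j.castSucc (Fin.last n) 1 = _
  rw [mul_sub, sub_mul, Matrix.mul_smul, Matrix.smul_mul, mul_one, one_mul,
    comm_std, comm_std, if_neg (Fin.castSucc_lt_last i).ne']
  rcases eq_or_ne i j with rfl | hij
  · rw [if_pos rfl, if_pos rfl]
    show _ = -(Matrix.single i.castSucc (Fin.last n) (1:K))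
    abel
  · rw [if_neg (fun h => hij (Fin.castSucc_injective n h)), if_neg hij]
    show _ = (0 : Matrix (Fin (n+1)) (Fin (n+1)) K)
    abel

lemma brXE (j k i : Fin n) (h : k ≠ i) :
    ⁅(xg j : sl (Fin (n+1)) K), eg k i h⁆ = (if i = j then -(xg k) else 0 : sl (Fin (n+1)) K) := by
  apply Subtype.ext
  rw [xg, eg, eE_bracket,
    if_neg (Fin.castSucc_lt_last k).ne']
  rcases eq_or_ne i j with rfl | hij
  · rw [if_pos rfl, if_pos rfl]
    show _ = -(Matrix.single k.castSucc (Fin.last n) (1:K))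
    abel
  · rw [if_neg (fun hh => hij (Fin.castSucc_injective n hh)), if_neg hij]
    show _ = (0 : Matrix (Fin (n+1)) (Fin (n+1)) K)
    abel

lemma brXFne (j i : Fin n) (h : j ≠ i) :
    ⁅(xg j : sl (Fin (n+1)) K), fg i⁆
      = (eg j i h : sl (Fin (n+1)) K) := by
  apply Subtype.ext
  rw [xg, fg]
  rw [eE_bracket]
  rw [if_pos rfl]
  rw [if_neg (fun hh => h (Fin.castSucc_injective n hh).symm)]
  show _ = Matrix.single j.castSucc i.castSucc (1:K)
  abel

lemma brXFeq (i : Fin n) :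
    ⁅(xg i : sl (Fin (n+1)) K), fg i⁆ = hE i + hbar K n := by
  apply Subtype.ext
  rw [xg, fg, eE_bracket, if_pos rfl, if_pos rfl]
  have hsum : ((hE i + hbar K n : sl (Fin (n+1)) K) : Matrix (Fin (n+1)) (Fin (n+1)) K)
      = (hE i).val + ∑ r : Fin n, (hE r : sl (Fin (n+1)) K).val := by
    rw [hbar]
    push_cast
    rfl
  rw [hsum]
  simp only [hE_val]
  rw [Finset.sum_sub_distrib, Finset.sum_const, Finset.card_univ, Fintype.card_fin]
  have hone : ((n + 1 : K))⁻¹ • (1 : Matrix (Fin (n+1)) (Fin (n+1)) K)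
      + n • ((n + 1 : K))⁻¹ • (1 : Matrix (Fin (n+1)) (Fin (n+1)) K) = 1 := by
    have hc : ((n + 1 : K))⁻¹ + (n : K) * ((n + 1 : K))⁻¹ = 1 := by
      have hne : (n + 1 : K) ≠ 0 := Nat.cast_add_one_ne_zero n
      field_simp
      ring
    rw [← Nat.cast_smul_eq_nsmul K, smul_smul, ← add_smul, hc, one_smul]
  have hsum1 : (∑ r : Fin n, Matrix.single (r.castSucc) (r.castSucc) (1:K))
      + Matrix.single (Fin.last n) (Fin.last n) 1 = 1 := by
    have := sum_diag_std (K := K) (N := n+1)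
    rwa [Fin.sum_univ_castSucc] at this
  have h1 : (∑ r : Fin n, Matrix.single (r.castSucc) (r.castSucc) (1:K))
      = ((n + 1 : K))⁻¹ • 1 + n • ((n + 1 : K))⁻¹ • 1
        - Matrix.single (Fin.last n) (Fin.last n) 1 :=
    eq_sub_iff_add_eq.mpr (hsum1.trans hone.symm)
  rw [h1]
  abel

lemma brHF (k i : Fin n) :
    ⁅(hE k : sl (Fin (n+1)) K), fg i⁆ = (if i = k then -(fg i) else 0 : sl (Fin (n+1)) K) := by
  apply Subtype.ext
  rw [sl_bracket]
  show (Matrix.single k.castSucc k.castSucc (1:K) - ((n + 1 : K))⁻¹ • 1)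
      * Matrix.single (Fin.last n) i.castSucc 1
    - Matrix.single (Fin.last n) i.castSucc 1
      * (Matrix.single k.castSucc k.castSucc (1:K) - ((n + 1 : K))⁻¹ • 1) = _
  rw [mul_sub, sub_mul, Matrix.mul_smul, Matrix.smul_mul, mul_one, one_mul,
    comm_std, comm_std, if_neg (Fin.castSucc_lt_last k).ne]
  rcases eq_or_ne i k with rfl | hik
  · rw [if_pos rfl, if_pos rfl]
    show _ = -(Matrix.single (Fin.last n) i.castSucc (1:K))
    abel
  · rw [if_neg (fun hh => hik (Fin.castSucc_injective n hh)), if_neg hik]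
    show _ = (0 : Matrix (Fin (n+1)) (Fin (n+1)) K)
    abel

end Brackets

set_option maxHeartbeats 2000000 in
open MvPolynomial in
/-- With `p_{ij} := ρ(e_{ij})(1)`, `p_{ii} := ρ(h_i)(1)` and
`q_i := ρ(e_{n+1,i})(1)`, one has
`x_k q_i^k + δ_{ki} q_i + Σ_r (p_{kk}^r p_{ri} + x_r p_{kk}^{ir} + p_{kk}^i p_{rr}) = 0`
for all `i, k`; in particular (`k = i`) each `q_i` is the unique polynomial with
`∂/∂x_i(x_i q_i) = -Σ_r (p_{ii}^r p_{ri} + x_r p_{ii}^{ir} + p_{ii}^i p_{rr})`, so `q_i`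
is uniquely determined by the `p_{ab}`. -/
theorem stmt14 (K : Type*) [Field K] [IsAlgClosed K] [CharZero K]
    (n : ℕ) (hn : 1 ≤ n)
    (ρ : sl (Fin (n + 1)) K →ₗ⁅K⁆ Module.End K (MvPolynomial (Fin n) K))
    (hx : ∀ (i : Fin n) (f : MvPolynomial (Fin n) K), ρ (xg i) f = X i * f)
    (P : Fin n → Fin n → MvPolynomial (Fin n) K)
    (hP : ∀ i j : Fin n,
      P i j = if h : i = j then ρ (hE i) 1 else ρ (eg i j h) 1)
    (q : Fin n → MvPolynomial (Fin n) K)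
    (hqdef : ∀ i : Fin n, q i = ρ (fg i) 1) :
    (∀ i k : Fin n,
      X k * pderiv k (q i) + (if k = i then q i else 0)
        + ∑ r : Fin n,
            (pderiv r (P k k) * P r i + X r * pderiv i (pderiv r (P k k))
              + pderiv i (P k k) * P r r) = 0) ∧
    (∀ (i : Fin n) (q' : MvPolynomial (Fin n) K),
      pderiv i (X i * q')
          = -∑ r : Fin n,
              (pderiv r (P i i) * P r i + X r * pderiv i (pderiv r (P i i))
                + pderiv i (P i i) * P r r)
        → q' = q i) := by
  classical
  -- apply ρ to a bracket and evaluate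
  have hbrack : ∀ (a b : sl (Fin (n + 1)) K) (f : MvPolynomial (Fin n) K),
      ρ ⁅a, b⁆ f = ρ a (ρ b f) - ρ b (ρ a f) := by
    intro a b f
    rw [LieHom.map_lie]
    rfl
  -- formula for ρ (hE k)
  have hH : ∀ (k : Fin n) (f : MvPolynomial (Fin n) K),
      ρ (hE k) f = X k * pderiv k f + P k k * f := by
    intro k f
    have hcomm : ∀ (j : Fin n) (g : MvPolynomial (Fin n) K),
        ρ (hE k) (X j * g) = X j * ρ (hE k) g + (if k = j then X j * g else 0) := by
      intro j g
      have h0 := hbrack (xg j) (hE k) g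
      rw [brXH j k, hx j (ρ (hE k) g), hx j g] at h0
      rcases eq_or_ne k j with rfl | hkj
      · rw [if_pos rfl] at h0 ⊢
        rw [map_neg ρ, LinearMap.neg_apply, hx k g] at h0
        linear_combination h0
      · rw [if_neg hkj] at h0 ⊢
        rw [map_zero ρ, LinearMap.zero_apply] at h0
        linear_combination h0
    set D : Module.End K (MvPolynomial (Fin n) K) :=
      ρ (hE k) - (LinearMap.mulLeft K (X k)).comp (pderiv k).toLinearMap with hDdef
    have hDapp : ∀ g : MvPolynomial (Fin n) K,
        D g = ρ (hE k) g - X k * pderiv k g := fun g => rfl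
    have hD : ∀ (j : Fin n) (g : MvPolynomial (Fin n) K), D (X j * g) = X j * D g := by
      intro j g
      rw [hDapp, hDapp, hcomm j g, pderiv_mul]
      rcases eq_or_ne k j with rfl | hkj
      · rw [if_pos rfl, pderiv_X_self]
        ring
      · rw [if_neg hkj, pderiv_X_of_ne (Ne.symm hkj)]
        ring
    have hfin := endMul D hD f
    rw [hDapp, hDapp] at hfin
    rw [pderiv_one, mul_zero, sub_zero] at hfin
    have h1 : ρ (hE k) 1 = P k k := by rw [hP k k, dif_pos rfl]
    rw [h1] at hfin
    linear_combination hfin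
  -- formula for ρ (eg k i h)
  have hA : ∀ (k i : Fin n) (h : k ≠ i) (f : MvPolynomial (Fin n) K),
      ρ (eg k i h) f = X k * pderiv i f + P k i * f := by
    intro k i h f
    have hcomm : ∀ (j : Fin n) (g : MvPolynomial (Fin n) K),
        ρ (eg k i h) (X j * g) = X j * ρ (eg k i h) g + (if i = j then X k * g else 0) := by
      intro j g
      have h0 := hbrack (xg j) (eg k i h) g
      rw [brXE j k i h, hx j (ρ (eg k i h) g), hx j g] at h0
      rcases eq_or_ne i j with rfl | hij
      · rw [if_pos rfl] at h0 ⊢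
        rw [map_neg ρ, LinearMap.neg_apply, hx k g] at h0
        linear_combination h0
      · rw [if_neg hij] at h0 ⊢
        rw [map_zero ρ, LinearMap.zero_apply] at h0
        linear_combination h0
    set D : Module.End K (MvPolynomial (Fin n) K) :=
      ρ (eg k i h) - (LinearMap.mulLeft K (X k)).comp (pderiv i).toLinearMap with hDdef
    have hDapp : ∀ g : MvPolynomial (Fin n) K,
        D g = ρ (eg k i h) g - X k * pderiv i g := fun g => rfl
    have hD : ∀ (j : Fin n) (g : MvPolynomial (Fin n) K), D (X j * g) = X j * D g := by
      intro j g
      rw [hDapp, hDapp, hcomm j g, pderiv_mul]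
      rcases eq_or_ne i j with rfl | hij
      · rw [if_pos rfl, pderiv_X_self]
        ring
      · rw [if_neg hij, pderiv_X_of_ne (Ne.symm hij)]
        ring
    have hfin := endMul D hD f
    rw [hDapp, hDapp] at hfin
    rw [pderiv_one, mul_zero, sub_zero] at hfin
    have h1 : ρ (eg k i h) 1 = P k i := by rw [hP k i, dif_neg h]
    rw [h1] at hfin
    linear_combination hfin
  -- formula for ρ (fg i)
  have hEform : ∀ (i : Fin n) (g : MvPolynomial (Fin n) K),
      ρ (fg i) g = q i * g - (∑ r : Fin n, X r * pderiv r (pderiv i g))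
        - ∑ m : Fin n,
            (P m i + (if m = i then ∑ r : Fin n, P r r else 0)) * pderiv m g := by
    intro i g0
    have hcomm : ∀ (j : Fin n) (g : MvPolynomial (Fin n) K),
        ρ (fg i) (X j * g) = X j * ρ (fg i) g
          - (X j * pderiv i g
              + (P j i + (if j = i then ∑ r : Fin n, P r r else 0)) * g
              + (if j = i then ∑ r : Fin n, X r * pderiv r g else 0)) := by
      intro j g
      have h0 := hbrack (xg j) (fg i) g
      rw [hx j (ρ (fg i) g), hx j g] at h0
      rcases eq_or_ne j i with rfl | hji
      · rw [if_pos rfl, if_pos rfl]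
        rw [brXFeq j] at h0
        have hsum : ρ (hE j + hbar K n) g = ρ (hE j) g + ∑ r : Fin n, ρ (hE r) g := by
          rw [map_add ρ, hbar]
          have h2 : ρ (∑ r : Fin n, hE r) = ∑ r : Fin n, ρ (hE r) :=
            map_sum (ρ.toLinearMap) (fun r : Fin n => hE r) Finset.univ
          rw [h2, LinearMap.add_apply, LinearMap.sum_apply]
        rw [hsum] at h0
        have h3 : ∑ r : Fin n, ρ (hE r) g
           = (∑ r : Fin n, X r * pderiv r g) + (∑ r : Fin n, P r r) * g := by
          rw [Finset.sum_mul, ← Finset.sum_add_distrib]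
          exact Finset.sum_congr rfl (fun r _ => hH r g)
        rw [h3, hH j g] at h0
        linear_combination h0
      · rw [if_neg hji, if_neg hji]
        rw [brXFne j i hji, hA j i hji g] at h0
        linear_combination h0
    set G : Module.End K (MvPolynomial (Fin n) K) :=
      ρ (fg i)
        + (∑ r : Fin n, (LinearMap.mulLeft K (X r : MvPolynomial (Fin n) K)).comp
            (((pderiv r).toLinearMap).comp (pderiv i).toLinearMap))
        + ∑ m : Fin n,
            (LinearMap.mulLeft K
              (P m i + (if m = i then ∑ r : Fin n, P r r else 0))).comp
              (pderiv m).toLinearMap with hGdef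
    have hGapp : ∀ g : MvPolynomial (Fin n) K,
        G g = ρ (fg i) g + (∑ r : Fin n, X r * pderiv r (pderiv i g))
          + ∑ m : Fin n,
              (P m i + (if m = i then ∑ r : Fin n, P r r else 0)) * pderiv m g := by
      intro g
      rw [hGdef]
      simp only [LinearMap.add_apply, LinearMap.sum_apply, LinearMap.comp_apply,
        LinearMap.mulLeft_apply, Derivation.coeFn_coe]
    have hGcomm : ∀ (j : Fin n) (g : MvPolynomial (Fin n) K), G (X j * g) = X j * G g := by
      intro j g
      have S2 : ∑ m : Fin n,
            (P m i + (if m = i then ∑ r : Fin n, P r r else 0)) * pderiv m (X j * g)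
          = (P j i + (if j = i then ∑ r : Fin n, P r r else 0)) * g
            + X j * ∑ m : Fin n,
                (P m i + (if m = i then ∑ r : Fin n, P r r else 0)) * pderiv m g := by
        have hterm : ∀ m : Fin n,
            (P m i + (if m = i then ∑ r : Fin n, P r r else 0)) * pderiv m (X j * g)
            = (if m = j then (P m i + (if m = i then ∑ r : Fin n, P r r else 0)) * g else 0)
              + X j * ((P m i + (if m = i then ∑ r : Fin n, P r r else 0)) * pderiv m g) := by
          intro m
          rw [pderiv_mul]
          rcases eq_or_ne m j with rfl | hmj
          · rw [pderiv_X_self, if_pos rfl]; ring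
          · rw [pderiv_X_of_ne (Ne.symm hmj), if_neg hmj]; ring
        rw [Finset.sum_congr rfl (fun m _ => hterm m), Finset.sum_add_distrib,
          Finset.sum_ite_eq' Finset.univ j, if_pos (Finset.mem_univ j), ← Finset.mul_sum]
      have S1 : ∑ r : Fin n, X r * pderiv r (pderiv i (X j * g))
          = (if j = i then ∑ r : Fin n, X r * pderiv r g else 0)
            + X j * pderiv i g + X j * ∑ r : Fin n, X r * pderiv r (pderiv i g) := by
        rcases eq_or_ne j i with rfl | hji
        · rw [if_pos rfl]
          have hterm : ∀ r : Fin n, X r * pderiv r (pderiv j (X j * g))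
              = X r * pderiv r g + (if r = j then X r * pderiv j g else 0)
                + X j * (X r * pderiv r (pderiv j g)) := by
            intro r
            rw [pderiv_mul, pderiv_X_self, one_mul, map_add, pderiv_mul]
            rcases eq_or_ne r j with rfl | hrj
            · rw [pderiv_X_self, if_pos rfl]; ring
            · rw [pderiv_X_of_ne (Ne.symm hrj), if_neg hrj]; ring
          rw [Finset.sum_congr rfl (fun r _ => hterm r), Finset.sum_add_distrib,
            Finset.sum_add_distrib, Finset.sum_ite_eq' Finset.univ j,
            if_pos (Finset.mem_univ j), ← Finset.mul_sum]
        · rw [if_neg hji]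
          have hterm : ∀ r : Fin n, X r * pderiv r (pderiv i (X j * g))
              = (if r = j then X r * pderiv i g else 0)
                + X j * (X r * pderiv r (pderiv i g)) := by
            intro r
            rw [pderiv_mul, pderiv_X_of_ne hji, zero_mul, zero_add, pderiv_mul]
            rcases eq_or_ne r j with rfl | hrj
            · rw [pderiv_X_self, if_pos rfl]; ring
            · rw [pderiv_X_of_ne (Ne.symm hrj), if_neg hrj]; ring
          rw [Finset.sum_congr rfl (fun r _ => hterm r), Finset.sum_add_distrib,
            Finset.sum_ite_eq' Finset.univ j, if_pos (Finset.mem_univ j), ← Finset.mul_sum]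
          ring
      rw [hGapp, hGapp, hcomm j g, S1, S2]
      ring
    have hfin := endMul G hGcomm g0
    have hG1 : G 1 = q i := by
      rw [hGapp]
      simp only [pderiv_one, map_zero, mul_zero, Finset.sum_const_zero, add_zero]
      exact (hqdef i).symm
    rw [hGapp, hG1] at hfin
    linear_combination hfin
  -- Part 1
  have part1 : ∀ i k : Fin n,
      X k * pderiv k (q i) + (if k = i then q i else 0)
        + ∑ r : Fin n,
            (pderiv r (P k k) * P r i + X r * pderiv i (pderiv r (P k k))
              + pderiv i (P k k) * P r r) = 0 := by
    intro i k
    have h0 := hbrack (hE k) (fg i) 1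
    rw [brHF k i] at h0
    rw [← hqdef i] at h0
    have hPkk : ρ (hE k) 1 = P k k := by rw [hP k k, dif_pos rfl]
    rw [hPkk, hH k (q i), hEform i (P k k)] at h0
    -- rewrite the goal's sum
    have hsplit : ∑ r : Fin n,
        (pderiv r (P k k) * P r i + X r * pderiv i (pderiv r (P k k))
          + pderiv i (P k k) * P r r)
        = (∑ r : Fin n, pderiv r (P k k) * P r i)
          + (∑ r : Fin n, X r * pderiv r (pderiv i (P k k)))
          + pderiv i (P k k) * ∑ r : Fin n, P r r := by
      rw [Finset.mul_sum, ← Finset.sum_add_distrib, ← Finset.sum_add_distrib]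
      refine Finset.sum_congr rfl (fun r _ => ?_)
      rw [pderiv_comm']
    have hcsum : ∑ m : Fin n,
        (P m i + (if m = i then ∑ r : Fin n, P r r else 0)) * pderiv m (P k k)
        = (∑ m : Fin n, pderiv m (P k k) * P m i)
          + pderiv i (P k k) * ∑ r : Fin n, P r r := by
      have hterm : ∀ m : Fin n,
          (P m i + (if m = i then ∑ r : Fin n, P r r else 0)) * pderiv m (P k k)
          = pderiv m (P k k) * P m i
            + (if m = i then pderiv m (P k k) * ∑ r : Fin n, P r r else 0) := by
        intro m
        rcases eq_or_ne m i with rfl | hmi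
        · rw [if_pos rfl, if_pos rfl]; ring
        · rw [if_neg hmi, if_neg hmi]; ring
      rw [Finset.sum_congr rfl (fun m _ => hterm m), Finset.sum_add_distrib,
        Finset.sum_ite_eq' Finset.univ i
          (fun m => pderiv m (P k k) * ∑ r : Fin n, P r r),
        if_pos (Finset.mem_univ i)]
    rw [hsplit]
    rcases eq_or_ne i k with rfl | hik
    · rw [if_pos rfl] at h0 ⊢
      rw [map_neg ρ, LinearMap.neg_apply, ← hqdef i] at h0
      rw [hcsum] at h0
      linear_combination -h0
    · rw [if_neg hik] at h0
      rw [if_neg (Ne.symm hik)]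
      rw [map_zero ρ, LinearMap.zero_apply] at h0
      rw [hcsum] at h0
      linear_combination -h0
  refine ⟨part1, ?_⟩
  intro i q' hq'
  have h1 := part1 i i
  rw [if_pos rfl] at h1
  have h2 : pderiv i (X i * q i)
      = -∑ r : Fin n,
          (pderiv r (P i i) * P r i + X r * pderiv i (pderiv r (P i i))
            + pderiv i (P i i) * P r r) := by
    rw [pderiv_mul, pderiv_X_self]
    linear_combination h1
  have h3 : pderiv i (X i * (q' - q i)) = 0 := by
    rw [mul_sub, map_sub, hq', h2, sub_self]
  have h4 := uniq_aux i (q' - q i) h3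
  exact sub_eq_zero.mp h4
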